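/- arXiv:math/0205207 — 2 statements merged into one kernel-verified Lean document; each statement's English description precedes it below -/
import Mathlib

section
/- Let p be a prime and let μ be the Haar measure on the compact additive group ℤ_p of p-adic integers, normalized so that μ(ℤ_p) = 1. Then for every natural number m, the integral ∫_{ℤ_p} ‖x‖^m dμ(x) equals (1 − p^{-1}) / (1 − p^{-(m+1)}). -/
open MeasureTheory ENNReal Pointwise

namespace PadicHaarAux

variable {p : ℕ} [Fact p.Prime] [MeasurableSpace ℤ_[p]] [BorelSpace ℤ_[p]]

/-- Closed ball of radius `p^{-n}` in `ℤ_[p]`. -/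
def B (p : ℕ) [Fact p.Prime] (n : ℕ) : Set ℤ_[p] := {x | ‖x‖ ≤ (p : ℝ) ^ (-(n : ℤ))}

lemma measurableSet_B (n : ℕ) : MeasurableSet (B p n) :=
  (isClosed_le continuous_norm continuous_const).measurableSet

lemma B_antitone {n k : ℕ} (h : n ≤ k) : B p k ⊆ B p n := by
  intro x hx
  have hp1 : (1 : ℝ) < (p : ℝ) := by exact_mod_cast (Fact.out : p.Prime).one_lt
  have h2 : (p : ℝ) ^ (-(k : ℤ)) ≤ (p : ℝ) ^ (-(n : ℤ)) :=
    zpow_le_zpow_right₀ hp1.le (by omega)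
  exact le_trans hx h2

lemma measure_B (μ : Measure ℤ_[p]) [μ.IsAddHaarMeasure] (hμ : μ Set.univ = 1) (n : ℕ) :
    μ (B p n) = ((p : ℝ≥0∞) ^ n)⁻¹ := by
  have hpn : ((p : ℝ≥0∞) ^ n) ≠ 0 := by
    simp [pow_ne_zero, Nat.cast_ne_zero, (Fact.out : p.Prime).ne_zero]
  have hpt : ((p : ℝ≥0∞) ^ n) ≠ ⊤ := by
    exact pow_ne_top (natCast_ne_top p)
  haveI : NeZero (p ^ n) := ⟨pow_ne_zero n (Fact.out : p.Prime).ne_zero⟩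
  set f := (PadicInt.toZModPow n : ℤ_[p] →+* ZMod (p ^ n)) with hf
  have key : ∀ z : ZMod (p ^ n), f ⁻¹' {z} = ((z.val : ℤ_[p]) +ᵥ B p n) := by
    intro z
    have hz : f ((z.val : ℕ) : ℤ_[p]) = z := by
      rw [map_natCast]
      exact ZMod.natCast_rightInverse z
    ext y
    simp only [Set.mem_preimage, Set.mem_singleton_iff,
      Set.mem_vadd_set_iff_neg_vadd_mem, vadd_eq_add]
    constructor
    · intro h
      have : f (y - (z.val : ℤ_[p])) = 0 := by rw [map_sub, h, hz, sub_self]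
      have hmem : y - (z.val : ℤ_[p]) ∈ RingHom.ker f := this
      rw [hf, PadicInt.ker_toZModPow] at hmem
      have := (PadicInt.norm_le_pow_iff_mem_span_pow (y - (z.val : ℤ_[p])) n).mpr hmem
      show (-(z.val : ℤ_[p]) + y) ∈ B p n
      simpa [B, neg_add_eq_sub] using this
    · intro h
      have h' : ‖y - (z.val : ℤ_[p])‖ ≤ (p : ℝ) ^ (-(n : ℤ)) := by
        simpa [B, neg_add_eq_sub] using h
      have hmem := (PadicInt.norm_le_pow_iff_mem_span_pow _ n).mp h'
      rw [← PadicInt.ker_toZModPow (p := p) n] at hmem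
      have h0 : f (y - (z.val : ℤ_[p])) = 0 := hmem
      rw [map_sub, sub_eq_zero, hz] at h0
      exact h0
  have hfib : ∀ z : ZMod (p ^ n), μ (f ⁻¹' {z}) = μ (B p n) := by
    intro z
    rw [key z, measure_vadd]
  have hmeas : ∀ z : ZMod (p ^ n), MeasurableSet (f ⁻¹' {z}) := by
    intro z
    rw [key z]
    have : ((z.val : ℤ_[p]) +ᵥ B p n) = (fun y => -(z.val : ℤ_[p]) + y) ⁻¹' B p n := by
      ext y; simp [Set.mem_vadd_set_iff_neg_vadd_mem]
    rw [this]
    exact (measurable_const_add _) (measurableSet_B n)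
  have hdisj : Pairwise (Function.onFun Disjoint fun z : ZMod (p ^ n) => f ⁻¹' {z}) := by
    intro a b hab
    exact (Set.disjoint_singleton.mpr hab).preimage f
  have hcover : (⋃ z : ZMod (p ^ n), f ⁻¹' {z}) = Set.univ := by
    ext y; simp
  have h1 : (1 : ℝ≥0∞) = (p : ℝ≥0∞) ^ n * μ (B p n) := by
    calc (1 : ℝ≥0∞) = μ Set.univ := hμ.symm
      _ = μ (⋃ z : ZMod (p ^ n), f ⁻¹' {z}) := by rw [hcover]
      _ = ∑' z : ZMod (p ^ n), μ (f ⁻¹' {z}) := measure_iUnion hdisj hmeas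
      _ = ∑' _ : ZMod (p ^ n), μ (B p n) := by exact tsum_congr hfib
      _ = (p : ℝ≥0∞) ^ n * μ (B p n) := by
          rw [tsum_eq_sum (s := Finset.univ) (by simp), Finset.sum_const]
          simp [ZMod.card, nsmul_eq_mul]
  calc μ (B p n) = ((p : ℝ≥0∞) ^ n)⁻¹ * ((p : ℝ≥0∞) ^ n * μ (B p n)) := by
        rw [← mul_assoc, ENNReal.inv_mul_cancel hpn hpt, one_mul]
    _ = ((p : ℝ≥0∞) ^ n)⁻¹ := by rw [← h1, mul_one]


/-- The sphere of radius `p^{-n}`. -/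
def S (p : ℕ) [Fact p.Prime] (n : ℕ) : Set ℤ_[p] := B p n \ B p (n + 1)

omit [MeasurableSpace ℤ_[p]] [BorelSpace ℤ_[p]] in
lemma norm_eq_of_mem_S {n : ℕ} {x : ℤ_[p]} (hx : x ∈ S p n) : ‖x‖ = (p : ℝ) ^ (-(n : ℤ)) := by
  obtain ⟨h1, h2⟩ := hx
  refine le_antisymm h1 ?_
  by_contra hlt
  push_neg at hlt
  have := (PadicInt.norm_lt_pow_iff_norm_le_pow_sub_one x (-(n : ℤ))).mp hlt
  apply h2
  show ‖x‖ ≤ (p : ℝ) ^ (-((n : ℕ) + 1 : ℕ) : ℤ)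
  convert this using 2
  push_cast
  ring

omit [MeasurableSpace ℤ_[p]] [BorelSpace ℤ_[p]] in
lemma compl_iUnion_S : (⋃ n, S p n)ᶜ = ({0} : Set ℤ_[p]) := by
  ext x
  simp only [Set.mem_compl_iff, Set.mem_iUnion, not_exists, Set.mem_singleton_iff]
  constructor
  · intro h
    by_contra hx
    set n := x.valuation with hn
    have hval : (n : ℤ) = x.valuation := rfl
    have hnorm : ‖x‖ = (p : ℝ) ^ (-(n : ℤ)) := by
      rw [PadicInt.norm_eq_zpow_neg_valuation hx]
    have hp1 : (1 : ℝ) < (p : ℝ) := by exact_mod_cast (Fact.out : p.Prime).one_lt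
    apply h n
    constructor
    · exact le_of_eq hnorm
    · intro hmem
      have hle : ‖x‖ ≤ (p : ℝ) ^ (-((n : ℕ) + 1 : ℕ) : ℤ) := hmem
      rw [hnorm] at hle
      have : (-(n : ℤ)) ≤ (-((n : ℕ) + 1 : ℕ) : ℤ) :=
        (zpow_le_zpow_iff_right₀ hp1).mp hle
      omega
  · rintro rfl n ⟨h1, h2⟩
    apply h2
    show ‖(0 : ℤ_[p])‖ ≤ (p : ℝ) ^ (-((n + 1 : ℕ)) : ℤ)
    rw [norm_zero]
    positivity

lemma measurableSet_S (n : ℕ) : MeasurableSet (S p n) :=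
  (measurableSet_B n).diff (measurableSet_B (n + 1))

lemma measure_S (μ : Measure ℤ_[p]) [μ.IsAddHaarMeasure] (hμ : μ Set.univ = 1) (n : ℕ) :
    μ (S p n) = ((p : ℝ≥0∞) ^ n)⁻¹ - ((p : ℝ≥0∞) ^ (n + 1))⁻¹ := by
  rw [S, measure_diff (B_antitone (by omega)) (measurableSet_B (n + 1)).nullMeasurableSet,
    measure_B μ hμ, measure_B μ hμ]
  rw [measure_B μ hμ]
  exact ENNReal.inv_ne_top.mpr (by simp [(Fact.out : p.Prime).ne_zero])

end PadicHaarAux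


open PadicHaarAux in
theorem padic_haar_norm_pow_integral (p : ℕ) [Fact p.Prime]
    [MeasurableSpace ℤ_[p]] [BorelSpace ℤ_[p]]
    (μ : Measure ℤ_[p]) [μ.IsAddHaarMeasure] (hμ : μ Set.univ = 1)
    (m : ℕ) :
    ∫ x : ℤ_[p], ‖x‖ ^ m ∂μ =
      (1 - (p : ℝ)⁻¹) / (1 - (p : ℝ) ^ (-((m : ℤ) + 1))) := by
  haveI : IsFiniteMeasure μ := ⟨by rw [hμ]; exact one_lt_top⟩
  have hp1 : (1 : ℝ) < (p : ℝ) := by exact_mod_cast (Fact.out : p.Prime).one_lt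
  have hp0 : (0 : ℝ) < (p : ℝ) := lt_trans one_pos hp1
  have hpne : (p : ℝ) ≠ 0 := hp0.ne'
  have hint : Integrable (fun x : ℤ_[p] => ‖x‖ ^ m) μ := by
    refine Integrable.mono' (integrable_const 1)
      (continuous_norm.pow m).aestronglyMeasurable ?_
    filter_upwards with x
    rw [Real.norm_eq_abs, abs_of_nonneg (by positivity)]
    exact pow_le_one₀ (norm_nonneg x) x.norm_le_one
  have hμ0 : μ ({0} : Set ℤ_[p]) = 0 := by
    have hle : ∀ n : ℕ, μ ({0} : Set ℤ_[p]) ≤ ((p : ℝ≥0∞)⁻¹) ^ n := by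
      intro n
      rw [← ENNReal.inv_pow, ← measure_B μ hμ n]
      apply measure_mono
      intro x hx
      rw [Set.mem_singleton_iff] at hx
      subst hx
      show ‖(0 : ℤ_[p])‖ ≤ (p : ℝ) ^ (-(n : ℤ))
      rw [norm_zero]
      positivity
    have htend := ENNReal.tendsto_pow_atTop_nhds_zero_of_lt_one
      (r := (p : ℝ≥0∞)⁻¹) (by
        rw [ENNReal.inv_lt_one]
        exact_mod_cast (Fact.out : p.Prime).one_lt)
    exact le_antisymm (ge_of_tendsto' htend hle) (zero_le)
  have hdisj : Pairwise (Function.onFun Disjoint fun n => S p n) := by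
    intro i j hij
    rcases lt_or_gt_of_ne hij with h | h
    · refine Set.disjoint_left.mpr ?_
      rintro x ⟨_, hx2⟩ hxj
      exact hx2 (B_antitone (by omega) hxj.1)
    · refine Set.disjoint_right.mpr ?_
      rintro x ⟨_, hx2⟩ hxi
      exact hx2 (B_antitone (by omega) hxi.1)
  have haeeq : (⋃ n, S p n) =ᵐ[μ] (Set.univ : Set ℤ_[p]) := by
    rw [MeasureTheory.ae_eq_univ, compl_iUnion_S]
    exact hμ0
  have hsplit : ∫ x : ℤ_[p], ‖x‖ ^ m ∂μ = ∑' n : ℕ, ∫ x in S p n, ‖x‖ ^ m ∂μ := by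
    rw [← setIntegral_univ, ← setIntegral_congr_set haeeq]
    exact integral_iUnion measurableSet_S hdisj hint.integrableOn
  have hterm : ∀ n : ℕ, ∫ x in S p n, ‖x‖ ^ m ∂μ
      = ((p : ℝ) ^ (-((m : ℤ) + 1))) ^ n * (1 - (p : ℝ)⁻¹) := by
    intro n
    rw [setIntegral_congr_fun (measurableSet_S n)
      (fun x hx => by rw [norm_eq_of_mem_S hx]), setIntegral_const, measureReal_def, measure_S μ hμ n]
    have hpn : ((p : ℝ≥0∞) ^ n) ≠ ⊤ := pow_ne_top (natCast_ne_top p)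
    have hle : ((p : ℝ≥0∞) ^ (n + 1))⁻¹ ≤ ((p : ℝ≥0∞) ^ n)⁻¹ := by
      apply ENNReal.inv_le_inv.mpr
      refine pow_le_pow_right₀ ?_ (by omega)
      exact_mod_cast Nat.one_le_iff_ne_zero.mpr (Fact.out : p.Prime).ne_zero
    have hia : (((p : ℝ≥0∞) ^ n)⁻¹) ≠ ⊤ := ENNReal.inv_ne_top.mpr
      (pow_ne_zero n (by exact_mod_cast (Fact.out : p.Prime).ne_zero))
    rw [ENNReal.toReal_sub_of_le hle hia]
    simp only [ENNReal.toReal_inv, ENNReal.toReal_pow, ENNReal.toReal_natCast, smul_eq_mul]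
    rw [show (-((m : ℤ) + 1)) = -(((m + 1 : ℕ)) : ℤ) by push_cast; ring]
    rw [zpow_neg, zpow_neg, zpow_natCast, zpow_natCast]
    have h1 : (p : ℝ) ^ n ≠ 0 := pow_ne_zero n hpne
    have h2 : (p : ℝ) ^ (n + 1) ≠ 0 := pow_ne_zero _ hpne
    have h3 : (p : ℝ) ^ (m + 1) ≠ 0 := pow_ne_zero _ hpne
    simp only [inv_pow, ← pow_mul]
    field_simp
    ring
  have hr0 : (0 : ℝ) ≤ (p : ℝ) ^ (-((m : ℤ) + 1)) := by positivity
  have hr1 : (p : ℝ) ^ (-((m : ℤ) + 1)) < 1 := by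
    rw [show (-((m : ℤ) + 1)) = -(((m + 1 : ℕ)) : ℤ) by push_cast; ring,
      zpow_neg, zpow_natCast]
    exact inv_lt_one_of_one_lt₀ (one_lt_pow₀ hp1 (by omega))
  rw [hsplit, tsum_congr hterm, tsum_mul_right, tsum_geometric_of_lt_one hr0 hr1,
    inv_mul_eq_div]
end

section
/- Let K be a field of characteristic different from 2, let n be a finite index type of odd cardinality, and let A be an n × n matrix over K that is skew-symmetric, i.e. Aᵀ = −A. Then there exists a polynomial Q ∈ K[X] such that the characteristic polynomial of A equals X · Q(X²), i.e. charpoly(A) = X * (Q composed with X²). -/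
open Polynomial

lemma coeff_comp_neg_X' {K : Type*} [CommRing K] (p : K[X]) (k : ℕ) :
    (p.comp (-X)).coeff k = (-1) ^ k * p.coeff k := by
  induction p using Polynomial.induction_on with
  | C a =>
      rw [C_comp, coeff_C]
      split_ifs with h
      · simp [h]
      · ring
  | add p q hp hq => simp [add_comp, hp, hq, mul_add]
  | monomial m a _ =>
      rw [mul_comp, C_comp, pow_comp, X_comp, neg_pow (X : K[X]) (m+1),
        show ((-1 : K[X]) ^ (m+1)) = C ((-1:K)^(m+1)) by simp,
        coeff_C_mul, coeff_C_mul, coeff_C_mul, coeff_X_pow]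
      split_ifs with h
      · subst h; ring
      · ring

lemma charmatrix_transpose' {K : Type*} [CommRing K] {n : Type*} [Fintype n]
    [DecidableEq n] (A : Matrix n n K) :
    Matrix.charmatrix A.transpose = (Matrix.charmatrix A).transpose := by
  refine Matrix.ext fun i j => ?_
  by_cases h : i = j
  · subst h
    simp [Matrix.charmatrix_apply_eq, Matrix.transpose_apply]
  · rw [Matrix.charmatrix_apply_ne _ _ _ h, Matrix.transpose_apply,
      Matrix.transpose_apply, Matrix.charmatrix_apply_ne _ _ _ (Ne.symm h)]

theorem charpoly_eq_X_mul_even_of_skewSymm_odd {K : Type*} [Field K]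
    (hchar : (2 : K) ≠ 0)
    {n : Type*} [Fintype n] [DecidableEq n] (hodd : Odd (Fintype.card n))
    (A : Matrix n n K) (hA : A.transpose = -A) :
    ∃ Q : K[X], A.charpoly = Polynomial.X * Q.comp (Polynomial.X ^ 2) := by
  set p := A.charpoly with hp
  -- charpoly of transpose
  have htrans : (A.transpose).charpoly = A.charpoly := by
    rw [Matrix.charpoly, charmatrix_transpose', Matrix.det_transpose, Matrix.charpoly]
  -- p.comp (-X) = -p
  have hcomp : p.comp (-X) = -p := by
    have h1 : p.comp (-X) = ((Matrix.charmatrix A).map (compRingHom (-X))).det := by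
      rw [hp, Matrix.charpoly, ← coe_compRingHom_apply, RingHom.map_det, RingHom.mapMatrix_apply]
    have h2 : (Matrix.charmatrix A).map (compRingHom (-X)) = -(Matrix.charmatrix (-A)) := by
      refine Matrix.ext fun i j => ?_
      by_cases h : i = j
      · subst h
        rw [Matrix.map_apply, Matrix.charmatrix_apply_eq, coe_compRingHom_apply, sub_comp,
          X_comp, C_comp, Matrix.neg_apply, Matrix.charmatrix_apply_eq, Matrix.neg_apply, map_neg]
        ring
      · rw [Matrix.map_apply, Matrix.charmatrix_apply_ne _ _ _ h, coe_compRingHom_apply,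
          neg_comp, C_comp, Matrix.neg_apply, Matrix.charmatrix_apply_ne _ _ _ h,
          Matrix.neg_apply, map_neg, neg_neg]
    rw [h1, h2, Matrix.det_neg, ← Matrix.charpoly, ← hA, htrans, hodd.neg_one_pow, ← hp,
      neg_one_mul]
  -- even coefficients vanish
  have heven : ∀ m : ℕ, Even m → p.coeff m = 0 := by
    intro m hm
    have := congrArg (fun q => q.coeff m) hcomp
    simp only [coeff_comp_neg_X', coeff_neg, hm.neg_one_pow, one_mul] at this
    have h2 : 2 * p.coeff m = 0 := by linear_combination this
    rcases mul_eq_zero.mp h2 with h | h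
    · exact absurd h hchar
    · exact h
  refine ⟨∑ k ∈ Finset.range (p.natDegree + 1), C (p.coeff (2 * k + 1)) * X ^ k, ?_⟩
  have hcompX : (∑ k ∈ Finset.range (p.natDegree + 1), C (p.coeff (2*k+1)) * X ^ k).comp (X^2)
      = ∑ k ∈ Finset.range (p.natDegree + 1), C (p.coeff (2*k+1)) * X ^ (2*k) := by
    rw [sum_comp]
    refine Finset.sum_congr rfl fun k _ => ?_
    rw [mul_comp, C_comp, pow_comp, X_comp, ← pow_mul]
  rw [hcompX, Finset.mul_sum,
    Finset.sum_congr rfl (fun k _ =>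
      show X * (C (p.coeff (2*k+1)) * X ^ (2*k)) = C (p.coeff (2*k+1)) * X ^ (2*k+1) by ring)]
  ext m
  rw [finset_sum_coeff]
  simp only [coeff_C_mul, coeff_X_pow, mul_ite, mul_one, mul_zero]
  rcases Nat.even_or_odd m with he | ho
  · rw [heven m he, Finset.sum_eq_zero]
    intro k _
    rw [if_neg]
    intro h
    exact (Nat.not_odd_iff_even.mpr he) (h ▸ odd_two_mul_add_one k)
  · obtain ⟨k0, hk0⟩ := ho
    by_cases hk : k0 ∈ Finset.range (p.natDegree + 1)
    · rw [Finset.sum_eq_single k0]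
      · rw [if_pos hk0, hk0]
      · intro k _ hne
        rw [if_neg]
        intro h
        exact hne (by omega)
      · intro h
        exact absurd hk h
    · have hm : p.natDegree < m := by
        simp only [Finset.mem_range, not_lt] at hk
        omega
      rw [coeff_eq_zero_of_natDegree_lt hm, Finset.sum_eq_zero]
      intro k hkr
      rw [if_neg]
      intro h
      simp only [Finset.mem_range, not_lt] at hkr hk
      omega
end
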